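/- arXiv:2111.00407 — 2 statements merged into one kernel-verified Lean document; each statement's English description precedes it below -/
import Mathlib

section
/- Every section of the Tuned/Correlated kernel has finite Hankel rank: for β ∈ [0,1) and each fixed t ∈ ℕ, the sequence s ↦ β^{max(s,t)} has an infinite Hankel matrix of finite rank (at most t + 1). -/
/-- Each section `s ↦ β ^ max s t` of the TC kernel has Hankel rank at most
`t + 1`. -/
theorem tc_section_finite_hankel_rank (β : ℝ) (hβ0 : 0 ≤ β) (hβ1 : β < 1) (t : ℕ) :
    Module.rank ℝ
      ↥(Submodule.span ℝ
        (Set.range (fun j : ℕ => fun i : ℕ => β ^ max (i + j) t))) ≤ t + 1 := by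
  set f : ℕ → (ℕ → ℝ) := fun j i => β ^ max (i + j) t with hf
  have hsub : Set.range f ⊆ ↑(Submodule.span ℝ (f '' {j | j ≤ t})) := by
    rintro _ ⟨j, rfl⟩
    by_cases hj : j ≤ t
    · exact Submodule.subset_span ⟨j, hj, rfl⟩
    · push_neg at hj
      have hkey : f j = β ^ (j - t) • f t := by
        funext i
        have h1 : max (i + j) t = i + j := max_eq_left (le_trans hj.le (Nat.le_add_left _ _))
        have h2 : max (i + t) t = i + t := max_eq_left (Nat.le_add_left _ _)
        simp only [hf, h1, h2, Pi.smul_apply, smul_eq_mul]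
        rw [← pow_add]
        congr 1
        omega
      rw [hkey]
      exact Submodule.smul_mem _ _ (Submodule.subset_span ⟨t, le_refl t, rfl⟩)
  have hle : Submodule.span ℝ (Set.range f) ≤ Submodule.span ℝ (f '' {j | j ≤ t}) :=
    Submodule.span_le.mpr hsub
  calc Module.rank ℝ ↥(Submodule.span ℝ (Set.range f))
      ≤ Module.rank ℝ ↥(Submodule.span ℝ (f '' {j | j ≤ t})) :=
        Submodule.rank_mono hle
    _ ≤ Cardinal.mk ↥(f '' {j | j ≤ t}) := rank_span_le _
    _ ≤ Cardinal.mk ↥({j | j ≤ t} : Set ℕ) := Cardinal.mk_image_le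
    _ = ((t + 1 : ℕ) : Cardinal) := by
        have : ({j | j ≤ t} : Set ℕ) = ↑(Finset.Iic t) := by ext x; simp
        rw [this]
        simp [Cardinal.mk_fintype]
    _ ≤ t + 1 := by norm_num
end

section
/- Every section of the Diagonal/Correlated kernel has finite Hankel rank: for β ∈ (0,1), γ ∈ [-1,1], and each fixed t ∈ ℕ, the sequence s ↦ β^{(s+t)/2}·γ^{|s-t|} has an infinite Hankel matrix of finite rank. -/
/-- Each section `s ↦ β ^ ((s + t)/2) * γ ^ |s - t|` of the DC kernel has
finite Hankel rank. -/
theorem dc_section_finite_hankel_rank (β γ : ℝ) (hβ0 : 0 < β) (hβ1 : β < 1)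
    (hγl : -1 ≤ γ) (hγu : γ ≤ 1) (t : ℕ) :
    Module.rank ℝ
      ↥(Submodule.span ℝ
        (Set.range (fun j : ℕ => fun i : ℕ =>
          β ^ ((((i + j : ℕ) : ℝ) + t) / 2) * γ ^ (((i + j : ℕ) : ℤ) - t).natAbs)))
      < Cardinal.aleph0 := by
  set f : ℕ → ℕ → ℝ := fun j : ℕ => fun i : ℕ =>
      β ^ ((((i + j : ℕ) : ℝ) + t) / 2) * γ ^ (((i + j : ℕ) : ℤ) - t).natAbs with hf
  have key : ∀ j, t ≤ j → f j = (β ^ (((j : ℝ) - t) / 2) * γ ^ (j - t)) • f t := by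
    intro j hj
    funext i
    simp only [hf, Pi.smul_apply, smul_eq_mul]
    have h1 : (((i + j : ℕ) : ℤ) - t).natAbs = (j - t) + i := by
      have : ((i + j : ℕ) : ℤ) - t = ((j - t + i : ℕ) : ℤ) := by
        push_cast [hj]
        ring
      rw [this, Int.natAbs_natCast]
    have h2 : (((i + t : ℕ) : ℤ) - t).natAbs = i := by
      have : ((i + t : ℕ) : ℤ) - t = (i : ℤ) := by push_cast; ring
      rw [this, Int.natAbs_natCast]
    rw [h1, h2]
    have h3 : (((i + j : ℕ) : ℝ) + t) / 2
        = (((j : ℝ) - t) / 2) + ((((i + t : ℕ) : ℝ) + t) / 2) := by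
      push_cast; ring
    rw [h3, Real.rpow_add hβ0, pow_add]
    ring
  have hsub : Set.range f ⊆ ↑(Submodule.span ℝ (f '' Set.Iic t)) := by
    rintro _ ⟨j, rfl⟩
    by_cases h : j ≤ t
    · exact Submodule.subset_span ⟨j, h, rfl⟩
    · rw [key j (le_of_not_ge h)]
      exact Submodule.smul_mem _ _ (Submodule.subset_span ⟨t, le_refl t, rfl⟩)
  have hle : Submodule.span ℝ (Set.range f) ≤ Submodule.span ℝ (f '' Set.Iic t) :=
    Submodule.span_le.mpr hsub
  calc Module.rank ℝ ↥(Submodule.span ℝ (Set.range f))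
      ≤ Module.rank ℝ ↥(Submodule.span ℝ (f '' Set.Iic t)) := Submodule.rank_mono hle
    _ ≤ Cardinal.mk (f '' Set.Iic t) := rank_span_le _
    _ < Cardinal.aleph0 := (Set.Finite.image f (Set.finite_Iic t)).lt_aleph0
end
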